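/- Let N be a norm on ℝ^{2n} with dual norm N_*, F_N(z)=½N(z)², and let v be an optimal control for the energy problem (P) with g≠e, with normal Pontryagin multiplier (1,λ) and associated function a. Then there exists a unique constant R>0 such that N(v(s))=N_*(a(s))=R for all s∈[0,T]. -/

import Mathlib

open MeasureTheory Set

noncomputable section

/-- `ℝ^{2n}`, with the Euclidean norm. -/
abbrev V (n : ℕ) := EuclideanSpace ℝ (Fin (2 * n))

/-- The `n`-th Heisenberg group as a set: `ℝ^{2n} × ℝ`. -/
abbrev Heis (n : ℕ) := V n × ℝ

/-- Euclidean dot product on `ℝ^{2n}`. -/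
def dot {n : ℕ} (p z : V n) : ℝ := ∑ i, p i * z i

/-- Index `i` as an element of the first half of `Fin (2n)`. -/
def fstIdx {n : ℕ} (i : Fin n) : Fin (2 * n) := ⟨i.1, by have := i.isLt; omega⟩

/-- Index `n + i` as an element of the second half of `Fin (2n)`. -/
def sndIdx {n : ℕ} (i : Fin n) : Fin (2 * n) := ⟨n + i.1, by have := i.isLt; omega⟩

/-- The symplectic form `⟨z, J_n z'⟩ = ∑ (y_i x'_i - x_i y'_i)` on `ℝ^{2n}`. -/
def symp {n : ℕ} (z z' : V n) : ℝ :=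
  ∑ i : Fin n, (z (sndIdx i) * z' (fstIdx i) - z (fstIdx i) * z' (sndIdx i))

/-- Heisenberg group multiplication. -/
def hmul {n : ℕ} (g g' : Heis n) : Heis n :=
  (g.1 + g'.1, g.2 + g'.2 + 2 * symp g.1 g'.1)

/-- Heisenberg group inverse. -/
def hinv {n : ℕ} (g : Heis n) : Heis n := (-g.1, -g.2)

/-- Heisenberg dilation `δ_λ(z,t) = (λ z, λ² t)`. -/
def dil {n : ℕ} (l : ℝ) (g : Heis n) : Heis n := (l • g.1, l ^ 2 * g.2)

/-- `N : ℝ^{2n} → ℝ` is a norm. -/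
structure IsNorm {n : ℕ} (N : V n → ℝ) : Prop where
  nonneg : ∀ z, 0 ≤ N z
  eq_zero_iff : ∀ z, N z = 0 ↔ z = 0
  smul : ∀ (a : ℝ) (z : V n), N (a • z) = |a| * N z
  triangle : ∀ z z', N (z + z') ≤ N z + N z'

/-- `N` is a strictly convex norm: additivity of the norm forces positive collinearity. -/
def StrictlyConvexNorm {n : ℕ} (N : V n → ℝ) : Prop :=
  ∀ z z' : V n, z ≠ 0 → z' ≠ 0 → N (z + z') = N z + N z' →
    ∃ α : ℝ, 0 < α ∧ z' = α • z

/-- The subdifferential of `f : ℝ^{2n} → ℝ` at `z`. -/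
def subdiff {n : ℕ} (f : V n → ℝ) (z : V n) : Set (V n) :=
  {p | ∀ z', f z + dot p (z' - z) ≤ f z'}

/-- A norm is smooth if its subdifferential is a singleton away from the origin. -/
def SmoothNorm {n : ℕ} (N : V n → ℝ) : Prop :=
  ∀ z : V n, z ≠ 0 → ∃ p : V n, subdiff N z = {p}

/-- The dual norm `N_*(p) = sup { p·z : N(z) = 1 }`. -/
def dualN {n : ℕ} (N : V n → ℝ) (p : V n) : ℝ :=
  sSup ((fun z => dot p z) '' {z | N z = 1})

/-- `F_N(z) = ½ N(z)²`. -/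
def FN {n : ℕ} (N : V n → ℝ) (z : V n) : ℝ := (1 / 2) * (N z) ^ 2

/-- The Legendre transform `f*(p) = sup_z (p·z - f(z))`. -/
def legendre {n : ℕ} (f : V n → ℝ) (p : V n) : ℝ :=
  ⨆ z : V n, (dot p z - f z)

/-- A horizontal (absolutely continuous) curve on `[a,b]`, encoded via an integrable
horizontal velocity `v = γ̇_I` together with the integral form of the horizontality
condition for the last coordinate. -/
structure HorizCurve (n : ℕ) (a b : ℝ) where
  γ : ℝ → Heis n
  v : ℝ → V n
  intg : IntegrableOn v (Icc a b)
  pos : ∀ s ∈ Icc a b, (γ s).1 = (γ a).1 + ∫ u in a..s, v u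
  vert : ∀ s ∈ Icc a b, (γ s).2 = (γ a).2 + ∫ u in a..s, 2 * symp ((γ u).1) (v u)

/-- The sub-Finsler distance associated to the norm `N` on `ℍⁿ`. -/
def dSF (n : ℕ) (N : V n → ℝ) (g g' : Heis n) : ℝ :=
  sInf { L | ∃ (a b : ℝ) (c : HorizCurve n a b), a ≤ b ∧ c.γ a = g ∧ c.γ b = g' ∧
    L = ∫ s in a..b, N (c.v s) }

/-- Horizontal projection of the trajectory of the control `v`,
solving `γ̇_I = -v`, `γ_I(0) = 0`. -/
def trajI (n : ℕ) (v : ℝ → V n) (s : ℝ) : V n := -∫ u in (0:ℝ)..s, v u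

/-- The trajectory of the control `v`: solves `ẋ_i = -v_i`, `ẏ_i = -v_{n+i}`,
`ṫ = -2∑(y_i v_i - x_i v_{n+i})`, starting at the neutral element. -/
def traj (n : ℕ) (v : ℝ → V n) (s : ℝ) : Heis n :=
  (trajI n v s, -∫ u in (0:ℝ)..s, 2 * symp (trajI n v u) (v u))

/-- `v` is an admissible control steering `e` to `g` in time `T`. -/
def Admissible (n : ℕ) (T : ℝ) (g : Heis n) (v : ℝ → V n) : Prop :=
  IntegrableOn v (Icc 0 T) ∧ traj n v T = g

/-- `v` is optimal for the energy problem (P). -/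
def OptimalEnergy (n : ℕ) (N : V n → ℝ) (T : ℝ) (g : Heis n) (v : ℝ → V n) : Prop :=
  Admissible n T g v ∧ ∀ w : ℝ → V n, Admissible n T g w →
    (∫ s in (0:ℝ)..T, FN N (v s)) ≤ ∫ s in (0:ℝ)..T, FN N (w s)

/-- `v` is optimal for the length problem. -/
def OptimalLength (n : ℕ) (N : V n → ℝ) (T : ℝ) (g : Heis n) (v : ℝ → V n) : Prop :=
  Admissible n T g v ∧ ∀ w : ℝ → V n, Admissible n T g w →
    (∫ s in (0:ℝ)..T, N (v s)) ≤ ∫ s in (0:ℝ)..T, N (w s)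

/-- The standard symplectic matrix `J_n` acting on `ℝ^{2n}`:
`(J z)_i = -z_{n+i}`, `(J z)_{n+i} = z_i`. -/
def Jmat (n : ℕ) (z : V n) : V n :=
  (EuclideanSpace.equiv (Fin (2 * n)) ℝ).symm
    (fun j => if h : (j : ℕ) < n then -z ⟨n + (j : ℕ), by have := j.isLt; omega⟩
      else z ⟨(j : ℕ) - n, by have := j.isLt; omega⟩)

/-- The function `a` associated to a multiplier `λ` (with `λ_{2n+1} ≡ k`) and a control `v`:
`a_i = λ_i + 2k y_i`, `a_{n+i} = λ_{n+i} - 2k x_i`, where `(x,y) = γ_I` is the horizontal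
projection of the trajectory of `v`. -/
def afun (n : ℕ) (v : ℝ → V n) (lam : ℝ → V n) (k : ℝ) (s : ℝ) : V n :=
  lam s - (2 * k) • Jmat n (trajI n v s)

/-- A Pontryagin multiplier `(λ₀, λ)` for the control `v` on `[0,T]` for problem (P):
`λ = (λ_I, k)` with `λ_{2n+1} ≡ k` constant, `λ̇_i = -2k v_{n+i}`, `λ̇_{n+i} = 2k v_i`
(in integrated form), nontriviality, the pointwise minimum principle, and constancy
of the minimized Hamiltonian. -/
structure PMP (n : ℕ) (N : V n → ℝ) (T : ℝ) (v : ℝ → V n) (l0 : ℝ) where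
  lam : ℝ → V n
  k : ℝ
  lam_eq : ∀ s ∈ Icc (0:ℝ) T,
    lam s = lam 0 + (2 * k) • ∫ u in (0:ℝ)..s, Jmat n (v u)
  nontriv : ¬(l0 = 0 ∧ k = 0 ∧ lam 0 = 0)
  argmin : ∀ s ∈ Icc (0:ℝ) T, ∀ u : V n,
    l0 * FN N (v s) - dot (afun n v lam k s) (v s) ≤ l0 * FN N u - dot (afun n v lam k s) u
  isConst : ∃ c : ℝ, ∀ s ∈ Icc (0:ℝ) T,
    l0 * FN N (v s) - dot (afun n v lam k s) (v s) = c

/-- A homogeneous norm on the Heisenberg group `ℍⁿ`. -/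
structure IsHomNorm {n : ℕ} (Nh : Heis n → ℝ) : Prop where
  nonneg : ∀ g, 0 ≤ Nh g
  eq_zero_iff : ∀ g, Nh g = 0 ↔ g = ((0 : V n), (0 : ℝ))
  symm : ∀ g, Nh (hinv g) = Nh g
  triangle : ∀ g g', Nh (hmul g g') ≤ Nh g + Nh g'
  homog : ∀ l : ℝ, 0 < l → ∀ g, Nh (dil l g) = l * Nh g

/-- The geodesic linearity property: every infinite geodesic of `(ℍⁿ, d)` is an affine
line in `ℝ^{2n+1}`. -/
def GLP (n : ℕ) (d : Heis n → Heis n → ℝ) : Prop :=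
  ∀ γ : ℝ → Heis n, (∀ s s' : ℝ, d (γ s) (γ s') = |s - s'|) →
    ∃ p u : Heis n, ∀ s : ℝ, γ s = p + s • u

/-- An infinite multiplier for the control `v` on `[0,∞)`. -/
def IsInfMult (n : ℕ) (N : V n → ℝ) (v : ℝ → V n) (lam : ℝ → V n) (k : ℝ) : Prop :=
  ∀ T : ℝ, 0 < T → ∃ m : PMP n N T v 1, m.lam = lam ∧ m.k = k

/-!
By the minimum principle `v(s)` minimises `F_N(u) - a(s)·u`. Since `a·u ≤ N_*(a) N(u)`, this
function is at least `½(N(u) - N_*(a))² - ½N_*(a)²`, while testing it on `u = N_*(a) z` with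
`N(z) = 1` shows that its infimum is at most `-½N_*(a)²`. Hence the minimiser satisfies
`N(v(s)) = N_*(a(s))` and the minimised Hamiltonian equals `-½N_*(a(s))²`; constancy of the
Hamiltonian makes `N_*(a(s))` constant, and the constant is positive because `v ≢ 0`
(otherwise the trajectory would stay at `e ≠ g`).
-/

lemma dot_eq_inner {n : ℕ} (p z : V n) : dot p z = inner ℝ p z := by
  simp [dot, PiLp.inner_apply, mul_comm]

lemma dot_smul_right {n : ℕ} (p z : V n) (c : ℝ) : dot p (c • z) = c * dot p z := by
  simp only [dot_eq_inner, inner_smul_right]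

namespace IsNorm

variable {n : ℕ} {N : V n → ℝ}

lemma map_zero (hN : IsNorm N) : N 0 = 0 := (hN.eq_zero_iff 0).2 rfl

lemma map_neg (hN : IsNorm N) (z : V n) : N (-z) = N z := by
  simpa using hN.smul (-1) z

lemma pos (hN : IsNorm N) {z : V n} (hz : z ≠ 0) : 0 < N z :=
  (hN.nonneg z).lt_of_ne fun h => hz ((hN.eq_zero_iff z).1 h.symm)

lemma map_inv_smul_self (hN : IsNorm N) {z : V n} (hz : z ≠ 0) : N ((N z)⁻¹ • z) = 1 := by
  rw [hN.smul, abs_of_pos (inv_pos.2 (hN.pos hz)), inv_mul_cancel₀ (hN.pos hz).ne']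

lemma convexOn (hN : IsNorm N) : ConvexOn ℝ univ N := by
  refine ⟨convex_univ, fun x _ y _ a b ha hb _ => ?_⟩
  calc N (a • x + b • y) ≤ N (a • x) + N (b • y) := hN.triangle _ _
    _ = a • N x + b • N y := by rw [hN.smul, hN.smul, abs_of_nonneg ha, abs_of_nonneg hb]; rfl

lemma continuous (hN : IsNorm N) : Continuous N :=
  continuousOn_univ.1 (hN.convexOn.continuousOn isOpen_univ)

lemma exists_pos_mul_norm_le (hN : IsNorm N) : ∃ c : ℝ, 0 < c ∧ ∀ z, c * ‖z‖ ≤ N z := by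
  rcases subsingleton_or_nontrivial (V n) with _ | _
  · exact ⟨1, one_pos, fun z => by simp [Subsingleton.elim z 0, hN.map_zero]⟩
  obtain ⟨z₀, hz₀, hmin⟩ := (isCompact_sphere (0 : V n) 1).exists_isMinOn
    (NormedSpace.sphere_nonempty.2 zero_le_one) hN.continuous.continuousOn
  rw [mem_sphere_zero_iff_norm] at hz₀
  refine ⟨N z₀, hN.pos (ne_zero_of_norm_ne_zero (by simp [hz₀])), fun z => ?_⟩
  rcases eq_or_ne z 0 with rfl | hz
  · simp [hN.map_zero]
  have hnz : 0 < ‖z‖ := norm_pos_iff.2 hz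
  have hmin_z := isMinOn_iff.1 hmin (‖z‖⁻¹ • z) (by simp [norm_smul, hnz.ne'])
  rw [hN.smul, abs_of_pos (inv_pos.2 hnz)] at hmin_z
  calc N z₀ * ‖z‖ ≤ ‖z‖⁻¹ * N z * ‖z‖ := by gcongr
    _ = N z := by field_simp

lemma bddAbove_dot_image_unitSphere (hN : IsNorm N) (p : V n) :
    BddAbove ((fun z => dot p z) '' {z | N z = 1}) := by
  obtain ⟨c, hc, hle⟩ := hN.exists_pos_mul_norm_le
  refine ⟨‖p‖ / c, ?_⟩
  rintro _ ⟨z, hz, rfl⟩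
  have hz' : ‖z‖ ≤ 1 / c := by rw [le_div_iff₀ hc, mul_comm]; exact hz ▸ hle z
  calc dot p z ≤ ‖p‖ * ‖z‖ := dot_eq_inner p z ▸ real_inner_le_norm p z
    _ ≤ ‖p‖ * (1 / c) := by gcongr
    _ = ‖p‖ / c := by ring

lemma dot_le_dualN (hN : IsNorm N) (p : V n) {z : V n} (hz : N z = 1) : dot p z ≤ dualN N p :=
  le_csSup (hN.bddAbove_dot_image_unitSphere p) ⟨z, hz, rfl⟩

lemma dualN_nonneg (hN : IsNorm N) (p : V n) : 0 ≤ dualN N p := by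
  rcases ({z | N z = 1} : Set (V n)).eq_empty_or_nonempty with h | ⟨z, hz⟩
  · simp [dualN, h]
  have h₁ := hN.dot_le_dualN p hz
  have h₂ := hN.dot_le_dualN p (z := -z) (by rwa [hN.map_neg])
  rw [dot_eq_inner, inner_neg_right, ← dot_eq_inner] at h₂
  linarith

lemma dot_le_dualN_mul (hN : IsNorm N) (p u : V n) : dot p u ≤ dualN N p * N u := by
  rcases eq_or_ne u 0 with rfl | hu
  · simp [dot, hN.map_zero]
  have h := hN.dot_le_dualN p (hN.map_inv_smul_self hu)
  rw [dot_smul_right, inv_mul_le_iff₀ (hN.pos hu)] at h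
  linarith

lemma half_sq_sub_half_sq_dualN_le_FN_sub_dot (hN : IsNorm N) (p u : V n) :
    (1 / 2) * (N u - dualN N p) ^ 2 - (1 / 2) * dualN N p ^ 2 ≤ FN N u - dot p u := by
  have := hN.dot_le_dualN_mul p u
  simp only [FN]
  nlinarith

lemma FN_sub_dot_le_neg_half_sq_dualN_of_minimizer (hN : IsNorm N) {p v : V n}
    (hmin : ∀ u, FN N v - dot p v ≤ FN N u - dot p u) :
    FN N v - dot p v ≤ -(1 / 2) * dualN N p ^ 2 := by
  rcases (hN.dualN_nonneg p).eq_or_lt with hR | hR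
  · rw [← hR]
    simpa [FN, hN.map_zero, dot] using hmin 0
  have hne : ((fun z => dot p z) '' {z | N z = 1}).Nonempty := by
    by_contra h
    simp only [dualN, Set.not_nonempty_iff_eq_empty.1 h, Real.sSup_empty] at hR
    exact lt_irrefl 0 hR
  set R := dualN N p
  have hsup : R ≤ ((1 / 2) * R ^ 2 - (FN N v - dot p v)) / R := by
    refine csSup_le hne ?_
    rintro _ ⟨z, hz, rfl⟩
    have hFz : FN N (R • z) = (1 / 2) * R ^ 2 := by
      rw [FN, hN.smul, hz, abs_of_pos hR, mul_one]
    have h := hmin (R • z)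
    rw [hFz, dot_smul_right] at h
    rw [le_div_iff₀ hR]
    linarith
  rw [le_div_iff₀ hR] at hsup
  linarith

lemma eq_dualN_of_minimizer (hN : IsNorm N) {p v : V n}
    (hmin : ∀ u, FN N v - dot p v ≤ FN N u - dot p u) :
    N v = dualN N p ∧ FN N v - dot p v = -(1 / 2) * dualN N p ^ 2 := by
  have hle := hN.FN_sub_dot_le_neg_half_sq_dualN_of_minimizer hmin
  have hge := hN.half_sq_sub_half_sq_dualN_le_FN_sub_dot p v
  have hsq : (N v - dualN N p) ^ 2 = 0 := le_antisymm (by linarith) (sq_nonneg _)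
  exact ⟨sub_eq_zero.1 (pow_eq_zero_iff two_ne_zero |>.1 hsq), by linarith⟩

end IsNorm

namespace PMP

variable {n : ℕ} {N : V n → ℝ} {T : ℝ} {v : ℝ → V n}

lemma norm_eq_dualN_afun (hN : IsNorm N) (m : PMP n N T v 1) {s : ℝ} (hs : s ∈ Icc 0 T) :
    N (v s) = dualN N (afun n v m.lam m.k s) ∧
      FN N (v s) - dot (afun n v m.lam m.k s) (v s) =
        -(1 / 2) * dualN N (afun n v m.lam m.k s) ^ 2 :=
  hN.eq_dualN_of_minimizer (by simpa only [one_mul] using m.argmin s hs)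

lemma dualN_afun_eq_norm_zero (hN : IsNorm N) (hT : 0 ≤ T) (m : PMP n N T v 1) {s : ℝ}
    (hs : s ∈ Icc 0 T) : dualN N (afun n v m.lam m.k s) = N (v 0) := by
  have h0 : (0 : ℝ) ∈ Icc 0 T := left_mem_Icc.2 hT
  obtain ⟨c, hc⟩ := m.isConst
  have h0' := m.norm_eq_dualN_afun hN h0
  simp only [one_mul] at hc
  rw [h0'.1, ← sq_eq_sq₀ (hN.dualN_nonneg _) (hN.dualN_nonneg _)]
  linarith [hc s hs, hc 0 h0, h0'.2, (m.norm_eq_dualN_afun hN hs).2]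

end PMP

lemma traj_eq_zero_of_eqOn_zero {n : ℕ} {T : ℝ} (hT : 0 ≤ T) {v : ℝ → V n}
    (hv : EqOn v 0 (Icc 0 T)) : traj n v T = ((0 : V n), (0 : ℝ)) := by
  have hI : EqOn (trajI n v) 0 (Icc 0 T) := fun s hs => by
    rw [trajI, intervalIntegral.integral_congr (g := 0) fun u hu =>
      hv ⟨(uIcc_of_le hs.1 ▸ hu).1, (uIcc_of_le hs.1 ▸ hu).2.trans hs.2⟩]
    simp
  refine Prod.ext (hI (right_mem_Icc.2 hT)) ?_
  change -∫ u in (0 : ℝ)..T, 2 * symp (trajI n v u) (v u) = 0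
  rw [intervalIntegral.integral_congr (g := 0) fun u hu => by
    simp [hv (uIcc_of_le hT ▸ hu), symp]]
  simp

/-- For an optimal control `v` of the energy problem with normal
multiplier `(1, λ)` and associated function `a`, there is a unique constant `R > 0`
with `N(v(s)) = N_*(a(s)) = R` on `[0,T]`. -/
theorem stmt11 (n : ℕ) (N : V n → ℝ) (hN : IsNorm N) (T : ℝ) (hT : 0 < T)
    (g : Heis n) (hg : g ≠ ((0 : V n), (0 : ℝ))) (v : ℝ → V n)
    (hopt : OptimalEnergy n N T g v) (m : PMP n N T v 1) :
    ∃! R : ℝ, 0 < R ∧ ∀ s ∈ Icc (0:ℝ) T,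
      N (v s) = R ∧ dualN N (afun n v m.lam m.k s) = R := by
  have hR : ∀ s ∈ Icc (0 : ℝ) T,
      N (v s) = N (v 0) ∧ dualN N (afun n v m.lam m.k s) = N (v 0) := fun s hs =>
    ⟨(m.norm_eq_dualN_afun hN hs).1.trans (m.dualN_afun_eq_norm_zero hN hT.le hs),
      m.dualN_afun_eq_norm_zero hN hT.le hs⟩
  obtain ⟨s, hs, hvs⟩ : ∃ s ∈ Icc (0 : ℝ) T, v s ≠ 0 := by
    by_contra! h
    exact hg (hopt.1.2 ▸ traj_eq_zero_of_eqOn_zero hT.le h)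
  refine ⟨N (v 0), ⟨(hR s hs).1 ▸ hN.pos hvs, hR⟩, fun R hR' => ?_⟩
  exact (hR'.2 0 (left_mem_Icc.2 hT.le)).1.symm

end
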